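/- Let S be a set and M a partial commutative monoid. If Q is a commutative boolean quantale, then the two-dimensional power series Q^{S×M}, with pointwise lattice structure and convolution acting only on the second coordinate, (f*g)(x,y) = ⨆_{y = y₁*y₂} f(x,y₁)*g(x,y₂), and unit 𝟙(x,y) = (1 if y = 1 else 0), forms a commutative boolean quantale. -/
import Mathlib


class PartialMonoid (M : Type*) where
  pmul : M → M → Option M
  pone : M
  pone_mul : ∀ x : M, pmul pone x = some x
  mul_pone : ∀ x : M, pmul x pone = some x
  passoc : ∀ x y z w : M,
    (∃ u, pmul x y = some u ∧ pmul u z = some w) ↔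
    (∃ v, pmul y z = some v ∧ pmul x v = some w)

/-- A partial commutative (resource) monoid. -/
class PartialCommMonoid (M : Type*) extends PartialMonoid M where
  pcomm : ∀ x y : M, pmul x y = pmul y x

/-- A commutative boolean quantale. -/
class CommBooleanQuantale (Q : Type*) extends CompleteBooleanAlgebra Q, CommMonoid Q where
  mul_sSup_distrib : ∀ (x : Q) (s : Set Q), x * sSup s = ⨆ y ∈ s, x * y
  sSup_mul_distrib : ∀ (s : Set Q) (x : Q), sSup s * x = ⨆ y ∈ s, y * x

open PartialMonoid

/-- Two-dimensional convolution on `S × M`, acting only on the second coordinate. -/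
def conv2 {S M Q : Type*} [PartialCommMonoid M] [CommBooleanQuantale Q]
    (f g : S × M → Q) : S × M → Q :=
  fun p => ⨆ (y₁ : M) (y₂ : M) (_ : pmul y₁ y₂ = some p.2), f (p.1, y₁) * g (p.1, y₂)

open Classical in
/-- Two-dimensional unit: `𝟙 (x, y) = 1` if `y = 1`, else `0`. -/
noncomputable def conv2Unit (S M Q : Type*) [PartialCommMonoid M] [CommBooleanQuantale Q] :
    S × M → Q :=
  fun p => if p.2 = pone then 1 else ⊥

section Aux
variable {Q : Type*} [CommBooleanQuantale Q]

lemma qmul_iSup {ι : Sort*} (x : Q) (f : ι → Q) : x * ⨆ i, f i = ⨆ i, x * f i := by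
  rw [iSup, CommBooleanQuantale.mul_sSup_distrib]
  exact iSup_range

lemma qiSup_mul {ι : Sort*} (f : ι → Q) (x : Q) : (⨆ i, f i) * x = ⨆ i, f i * x := by
  rw [iSup, CommBooleanQuantale.sSup_mul_distrib]
  exact iSup_range

lemma qbot_mul (x : Q) : (⊥ : Q) * x = ⊥ := by
  have := CommBooleanQuantale.sSup_mul_distrib (∅ : Set Q) x
  simpa using this

lemma qmul_le_mul_left {a b : Q} (c : Q) (h : a ≤ b) : c * a ≤ c * b := by
  have hsup : c * (a ⊔ b) = c * a ⊔ c * b := by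
    rw [← sSup_pair, CommBooleanQuantale.mul_sSup_distrib, iSup_pair]
  rw [sup_eq_right.mpr h] at hsup
  rw [hsup]; exact le_sup_left

variable {S M : Type*} [PartialCommMonoid M]

lemma le_conv2 (f g : S × M → Q) (p : S × M) (a b : M) (hab : pmul a b = some p.2) :
    f (p.1, a) * g (p.1, b) ≤ conv2 f g p :=
  le_iSup_of_le a (le_iSup_of_le b (le_iSup_of_le hab le_rfl))

lemma conv2_le {f g : S × M → Q} {p : S × M} {x : Q}
    (h : ∀ a b, pmul a b = some p.2 → f (p.1, a) * g (p.1, b) ≤ x) :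
    conv2 f g p ≤ x :=
  iSup_le fun a => iSup_le fun b => iSup_le fun hab => h a b hab

lemma conv2_mono_right {f g g' : S × M → Q} (h : g ≤ g') (p : S × M) :
    conv2 f g p ≤ conv2 f g' p := by
  refine conv2_le fun a b hab => ?_
  exact le_trans (qmul_le_mul_left _ (h _)) (le_conv2 f g' p a b hab)

lemma conv2_comm (f g : S × M → Q) : conv2 f g = conv2 g f := by
  have key : ∀ (f g : S × M → Q) (p : S × M), conv2 f g p ≤ conv2 g f p := by
    intro f g p
    refine conv2_le fun a b hab => ?_
    have hba : pmul b a = some p.2 := by rw [PartialCommMonoid.pcomm]; exact hab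
    rw [mul_comm]
    exact le_conv2 g f p b a hba
  funext p
  exact le_antisymm (key f g p) (key g f p)

lemma conv2_apply_mul_right (f g : S × M → Q) (x : S) (a : M) (q : Q) :
    conv2 f g (x, a) * q =
      ⨆ c, ⨆ d, ⨆ (_ : pmul c d = some a), f (x, c) * g (x, d) * q := by
  unfold conv2
  simp only [qiSup_mul]

lemma mul_conv2_apply (f g : S × M → Q) (x : S) (a : M) (q : Q) :
    q * conv2 f g (x, a) =
      ⨆ c, ⨆ d, ⨆ (_ : pmul c d = some a), q * (f (x, c) * g (x, d)) := by
  unfold conv2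
  simp only [qmul_iSup]

lemma conv2_assoc (f g h : S × M → Q) : conv2 (conv2 f g) h = conv2 f (conv2 g h) := by
  funext p
  apply le_antisymm
  · refine conv2_le fun a b hab => ?_
    rw [conv2_apply_mul_right]
    refine iSup_le fun c => iSup_le fun d => iSup_le fun hcd => ?_
    obtain ⟨v, hdb, hcv⟩ := (PartialMonoid.passoc c d b p.2).mp ⟨a, hcd, hab⟩
    calc f (p.1, c) * g (p.1, d) * h (p.1, b)
        = f (p.1, c) * (g (p.1, d) * h (p.1, b)) := mul_assoc _ _ _
      _ ≤ f (p.1, c) * conv2 g h (p.1, v) :=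
          qmul_le_mul_left _ (le_conv2 g h (p.1, v) d b hdb)
      _ ≤ _ := le_conv2 f (conv2 g h) p c v hcv
  · refine conv2_le fun a b hab => ?_
    rw [mul_conv2_apply]
    refine iSup_le fun c => iSup_le fun d => iSup_le fun hcd => ?_
    obtain ⟨u, hac, hud⟩ := (PartialMonoid.passoc a c d p.2).mpr ⟨b, hcd, hab⟩
    calc f (p.1, a) * (g (p.1, c) * h (p.1, d))
        = f (p.1, a) * g (p.1, c) * h (p.1, d) := (mul_assoc _ _ _).symm
      _ ≤ conv2 f g (p.1, u) * h (p.1, d) := by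
          rw [mul_comm _ (h (p.1, d)), mul_comm (conv2 f g _)]
          exact qmul_le_mul_left _ (le_conv2 f g (p.1, u) a c hac)
      _ ≤ _ := le_conv2 (conv2 f g) h p u d hud

lemma conv2_unit_left (f : S × M → Q) : conv2 (conv2Unit S M Q) f = f := by
  funext p
  apply le_antisymm
  · refine conv2_le fun a b hab => ?_
    unfold conv2Unit
    by_cases ha : a = pone
    · subst ha
      have hb : b = p.2 := by
        have := PartialMonoid.pone_mul b
        rw [this] at hab; exact Option.some_injective _ hab
      subst hb
      simp
    · simp only [if_neg ha, qbot_mul]; exact bot_le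
  · have h1 : conv2Unit S M Q (p.1, pone) * f (p.1, p.2) = f p := by
      unfold conv2Unit; simp
    rw [← h1]
    exact le_conv2 _ f p pone p.2 (PartialMonoid.pone_mul p.2)

lemma conv2_sSup (f : S × M → Q) (s : Set (S × M → Q)) :
    conv2 f (sSup s) = ⨆ g ∈ s, conv2 f g := by
  funext p
  have happ : (⨆ g ∈ s, conv2 f g) p = ⨆ g ∈ s, conv2 f g p := by
    simp [iSup_apply]
  rw [happ]
  apply le_antisymm
  · refine conv2_le fun a b hab => ?_
    have : sSup s (p.1, b) = ⨆ g : s, (g : S × M → Q) (p.1, b) := by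
      rw [sSup_apply]
    rw [this, qmul_iSup]
    refine iSup_le fun g => ?_
    exact le_trans (le_conv2 f g p a b hab)
      (le_iSup_of_le g.1 (le_iSup_of_le g.2 le_rfl))
  · refine iSup_le fun g => iSup_le fun hg => ?_
    exact conv2_mono_right (le_sSup hg) p

end Aux

/-- For a set `S`, a partial commutative monoid `M` and a commutative boolean quantale
`Q`, the two-dimensional power series `Q^{S×M}` with convolution acting on the second
coordinate form a commutative boolean quantale. -/


theorem twoDim_powerSeries_commBooleanQuantale (S M Q : Type*)
    [PartialCommMonoid M] [CommBooleanQuantale Q] :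
    (∀ f g h : S × M → Q, conv2 (conv2 f g) h = conv2 f (conv2 g h)) ∧
    (∀ f : S × M → Q, conv2 (conv2Unit S M Q) f = f) ∧
    (∀ f : S × M → Q, conv2 f (conv2Unit S M Q) = f) ∧
    (∀ (f : S × M → Q) (s : Set (S × M → Q)), conv2 f (sSup s) = ⨆ g ∈ s, conv2 f g) ∧
    (∀ (s : Set (S × M → Q)) (g : S × M → Q), conv2 (sSup s) g = ⨆ f ∈ s, conv2 f g) ∧
    (∀ f g : S × M → Q, conv2 f g = conv2 g f) ∧
    (∀ f : S × M → Q, f ⊓ (fun p => (f p)ᶜ) = ⊥) ∧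
    (∀ f : S × M → Q, f ⊔ (fun p => (f p)ᶜ) = ⊤) ∧
    (∀ (f : S × M → Q) (s : Set (S × M → Q)), f ⊓ sSup s = ⨆ g ∈ s, f ⊓ g) ∧
    (∀ (f : S × M → Q) (s : Set (S × M → Q)), f ⊔ sInf s = ⨅ g ∈ s, f ⊔ g) := by
  refine ⟨conv2_assoc, conv2_unit_left, ?_, conv2_sSup, ?_, conv2_comm, ?_, ?_, ?_, ?_⟩
  · intro f
    rw [conv2_comm]; exact conv2_unit_left f
  · intro s g
    rw [conv2_comm, conv2_sSup]
    exact iSup_congr fun f => iSup_congr fun _ => conv2_comm g f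
  · intro f; funext p; exact inf_compl_eq_bot
  · intro f; funext p; exact sup_compl_eq_top
  · intro f s; exact inf_sSup_eq
  · intro f s; exact sup_sInf_eq
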